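/- Let F be a presheaf of sets on a category C with pullbacks, and suppose for objects the square associated to a morphism f : X → Y and a 'closed decomposition' Z → Y with E = X ×_Y Z satisfies: F(Y) is the equalizer of F(X) ⇉ F(X ×_Y X), and the natural map F(X ×_Y X) → F(X) × F(E ×_Z E) induced by the diagonal component and restriction is such that the two pullbacks to F(E ×_Z E) of any a ∈ F(X) whose restriction to F(E) is pulled back from F(Z) agree. Then the square F(Y) → F(X), F(Y) → F(Z), both restricting to F(E), is a pullback square of sets: F(Y) ≅ F(X) ×_{F(E)} F(Z). -/

import Mathlib

open CategoryTheory CategoryTheory.Limits Opposite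

/-- The canonical morphism `E ×_Z E ⟶ X ×_Y X`, where `E = X ×_Y Z` for `f : X ⟶ Y`,
`z : Z ⟶ Y`. -/
noncomputable def deltaEZ {C : Type u} [Category.{v} C] [HasPullbacks C]
    {X Y Z : C} (f : X ⟶ Y) (z : Z ⟶ Y) :
    pullback (pullback.snd f z) (pullback.snd f z) ⟶ pullback f f :=
  pullback.lift
    (pullback.fst (pullback.snd f z) (pullback.snd f z) ≫ pullback.fst f z)
    (pullback.snd (pullback.snd f z) (pullback.snd f z) ≫ pullback.fst f z)
    (by
      have h := pullback.condition (f := f) (g := z)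
      have h' := pullback.condition (f := pullback.snd f z) (g := pullback.snd f z)
      simp only [Category.assoc, h]
      rw [← Category.assoc, h', Category.assoc])


/-!
Descent along `f` reduces the claim to showing that `a` has equal pullbacks along the two
projections `X ×_Y X ⟶ X`. By the joint injectivity hypothesis this may be tested on the diagonal,
where both pullbacks are `a`, and on `E ×_Z E`, where both factor through the restriction of `a`
to `E`, which is pulled back from `Z`. The resulting section of `F Y` restricts to `b` on `Z`
because both restrict to the same section on `E` and `F Z ⟶ F E` is injective.
-/

namespace CategoryTheory.Functor

variable {C : Type u} [Category.{v} C] (F : Cᵒᵖ ⥤ Type w)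

theorem map_map_eq_of_comp_eq {A B B' D : C} {g : A ⟶ B} {f : B ⟶ D} {h : A ⟶ B'}
    {k : B' ⟶ D} (w : g ≫ f = h ≫ k) (x : F.obj (op D)) :
    F.map g.op (F.map f.op x) = F.map h.op (F.map k.op x) := by
  simp only [← map_comp_apply, ← op_comp, w]

theorem map_map_of_comp_eq_id {A B : C} {g : A ⟶ B} {f : B ⟶ A} (w : g ≫ f = 𝟙 A)
    (x : F.obj (op A)) : F.map g.op (F.map f.op x) = x := by
  rw [← map_comp_apply, ← op_comp, w, op_id, map_id_apply]

end CategoryTheory.Functor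

section

variable {C : Type u} [Category.{v} C] [HasPullbacks C] {X Y Z : C} (f : X ⟶ Y) (z : Z ⟶ Y)

@[simp]
theorem deltaEZ_fst :
    deltaEZ f z ≫ pullback.fst f f =
      pullback.fst (pullback.snd f z) (pullback.snd f z) ≫ pullback.fst f z :=
  pullback.lift_fst _ _ _

@[simp]
theorem deltaEZ_snd :
    deltaEZ f z ≫ pullback.snd f f =
      pullback.snd (pullback.snd f z) (pullback.snd f z) ≫ pullback.fst f z :=
  pullback.lift_snd _ _ _

variable {f z} (F : Cᵒᵖ ⥤ Type w)

theorem map_diagonal_map_fst_eq_map_snd (a : F.obj (op X)) :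
    F.map (pullback.diagonal f).op (F.map (pullback.fst f f).op a) =
      F.map (pullback.diagonal f).op (F.map (pullback.snd f f).op a) := by
  rw [F.map_map_of_comp_eq_id (pullback.diagonal_fst f),
    F.map_map_of_comp_eq_id (pullback.diagonal_snd f)]

theorem map_deltaEZ_map_fst_eq_map_snd {a : F.obj (op X)} {b : F.obj (op Z)}
    (hab : F.map (pullback.fst f z).op a = F.map (pullback.snd f z).op b) :
    F.map (deltaEZ f z).op (F.map (pullback.fst f f).op a) =
      F.map (deltaEZ f z).op (F.map (pullback.snd f f).op a) := by
  rw [F.map_map_eq_of_comp_eq (deltaEZ_fst f z), F.map_map_eq_of_comp_eq (deltaEZ_snd f z), hab,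
    F.map_map_eq_of_comp_eq pullback.condition]

end

/-- Descent along an abstract blowup square.  Let `F` be a presheaf of sets on a category
with pullbacks, `f : X ⟶ Y` and `z : Z ⟶ Y` morphisms, `E = X ×_Y Z`.  Assume:
(1) `F` satisfies Čech descent along `f` (`F Y` is the equalizer of `F X ⇉ F (X ×_Y X)`);
(2) `F Z → F E` is injective;
(3) agreement of sections of `F` on `X ×_Y X` may be checked after restriction along the
diagonal `X → X ×_Y X` and along `E ×_Z E → X ×_Y X` (these restrictions are jointly
injective).
Then the square is cartesian: `F Y ≅ F X ×_{F E} F Z`. -/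
theorem stmt19 {C : Type u} [Category.{v} C] [HasPullbacks C] (F : Cᵒᵖ ⥤ Type w)
    {X Y Z : C} (f : X ⟶ Y) (z : Z ⟶ Y)
    (h1 : ∀ b : F.obj (op X),
      F.map (pullback.fst f f).op b = F.map (pullback.snd f f).op b →
        ∃! a : F.obj (op Y), F.map f.op a = b)
    (h2 : Function.Injective (F.map (pullback.snd f z).op))
    (h3 : ∀ c c' : F.obj (op (pullback f f)),
      F.map (pullback.lift (𝟙 X) (𝟙 X) rfl).op c = F.map (pullback.lift (𝟙 X) (𝟙 X) rfl).op c' →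
      F.map (deltaEZ f z).op c = F.map (deltaEZ f z).op c' →
      c = c') :
    ∀ (a : F.obj (op X)) (b : F.obj (op Z)),
      F.map (pullback.fst f z).op a = F.map (pullback.snd f z).op b →
        ∃! y : F.obj (op Y), F.map f.op y = a ∧ F.map z.op y = b := by
  intro a b hab
  have ha : F.map (pullback.fst f f).op a = F.map (pullback.snd f f).op a :=
    h3 _ _ (map_diagonal_map_fst_eq_map_snd F a) (map_deltaEZ_map_fst_eq_map_snd F hab)
  obtain ⟨y, hy, hy_unique⟩ := h1 a ha
  have hzy : F.map z.op y = b := h2 (by rw [← F.map_map_eq_of_comp_eq pullback.condition, hy, hab])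
  exact ⟨y, ⟨hy, hzy⟩, fun y' hy' => hy_unique y' hy'.1⟩
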